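/- Let n ≥ 2 and let F be a family of (n−1)-element subsets of [n]. Define the complementary singleton family F* = { {r} : r ∈ [n], [n] ∖ {r} ∉ F }. Then Bob(F) holds if and only if Alice(F*) does not hold. -/

import Mathlib

/-- The board `[n] = {1, …, n}` as a finite set of natural numbers. -/
def board (n : ℕ) : Finset ℕ := Finset.Icc 1 n

/-- The order-preserving relabelling of `[n] \ {x}` onto `[n-1]`:
elements below `x` are unchanged, elements above `x` drop by one. -/
def stdElt (x r : ℕ) : ℕ := if r < x then r else r - 1

/-- Standardise a set avoiding `x`: relabel it via `stdElt x`. -/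
def stdSet (x : ℕ) (S : Finset ℕ) : Finset ℕ := S.image (stdElt x)

/-- The standardised section `F_x^+ = { S \ {x} : x ∈ S ∈ F }`,
viewed as a family of subsets of `[n-1]`. -/
def secPlus (F : Set (Finset ℕ)) (x : ℕ) : Set (Finset ℕ) :=
  {T | ∃ S ∈ F, x ∈ S ∧ T = stdSet x (S.erase x)}

/-- The standardised section `F_x^- = { S ∈ F : x ∉ S }`,
viewed as a family of subsets of `[n-1]`. -/
def secMinus (F : Set (Finset ℕ)) (x : ℕ) : Set (Finset ℕ) :=
  {T | ∃ S ∈ F, x ∉ S ∧ T = stdSet x S}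

mutual
  /-- `AliceWins n k F`: Alice wins her `F`-game, where `F` is a family of
  `k`-subsets of `[n]`.  Terminal games (`k = 0` or `k = n`) are won iff `F`
  is nonempty; otherwise Alice needs a first offer `x` such that Bob wins both
  his `F_x^+`-game and his `F_x^-`-game. -/
  def AliceWins (n k : ℕ) (F : Set (Finset ℕ)) : Prop :=
    if h : k = 0 ∨ n ≤ k then F.Nonempty
    else ∃ x ∈ board n,
      BobWins (n - 1) (k - 1) (secPlus F x) ∧ BobWins (n - 1) k (secMinus F x)
  termination_by n
  decreasing_by all_goals omega

  /-- `BobWins n k F`: Bob wins his `F`-game, where `F` is a family of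
  `k`-subsets of `[n]`.  Terminal games (`k = 0` or `k = n`) are won iff `F`
  is nonempty; otherwise Bob needs, for every first offer `x`, that Alice wins
  her `F_x^+`-game or her `F_x^-`-game. -/
  def BobWins (n k : ℕ) (F : Set (Finset ℕ)) : Prop :=
    if h : k = 0 ∨ n ≤ k then F.Nonempty
    else ∀ x ∈ board n,
      AliceWins (n - 1) (k - 1) (secPlus F x) ∨ AliceWins (n - 1) k (secMinus F x)
  termination_by n
  decreasing_by all_goals omega
end

/-- `S ⪯ T` in the pointwise order: the increasing enumerations of `S` and `T`
have the same length and are pointwise `≤`. -/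
def PointwiseLE (S T : Finset ℕ) : Prop :=
  List.Forall₂ (· ≤ ·) (S.sort (· ≤ ·)) (T.sort (· ≤ ·))

/-- `F` consists of `k`-element subsets of `[n]`. -/
def IsFamilyOn (n k : ℕ) (F : Set (Finset ℕ)) : Prop :=
  ∀ S ∈ F, S ⊆ board n ∧ S.card = k

/-- `F` is pointwise-increasing as a family of `k`-subsets of `[n]`:
it is upwards closed in the pointwise order. -/
def IsIncreasingFamily (n k : ℕ) (F : Set (Finset ℕ)) : Prop :=
  ∀ S T : Finset ℕ, S ∈ F → T ⊆ board n → T.card = k → PointwiseLE S T → T ∈ F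

/-
Deleting a point `x` of `[n]` and relabelling turns the complementary singleton family into the
complementary singleton family of the section: `(F*)_x^- = (F_x^+)*`. Moreover `F_x^-` is nonempty
exactly when `[n] \ {x} ∈ F`, and `(F*)_x^+` is nonempty exactly when `[n] \ {x} ∉ F`. So after the
offer `x` in the `F`-game and the same offer in the `F*`-game, the terminal branches have opposite
outcomes and the remaining branches are again a game on an `(n-2)`-family and on its complementary
singleton family. Induction on `n` then shows simultaneously that Bob wins the `F`-game iff Alice
loses the `F*`-game, and that Alice wins the `F`-game iff Bob loses the `F*`-game.
-/

lemma mem_board {n r : ℕ} : r ∈ board n ↔ 1 ≤ r ∧ r ≤ n := Finset.mem_Icc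

lemma card_board (n : ℕ) : (board n).card = n := by
  simp [board]

lemma Finset.exists_erase_eq_of_card_add_one {α : Type*} [DecidableEq α] {s t : Finset α}
    (hst : s ⊆ t) (hcard : s.card + 1 = t.card) : ∃ a ∈ t, t.erase a = s :=
  Finset.covBy_iff_exists_erase.1 <| Finset.covBy_iff_card_sdiff_eq_one.2
    ⟨hst, by rw [Finset.card_sdiff_of_subset hst]; omega⟩

lemma exists_erase_board_eq {n : ℕ} {S : Finset ℕ} (hn : 1 ≤ n) (hS : S ⊆ board n)
    (hcard : S.card = n - 1) : ∃ r ∈ board n, (board n).erase r = S :=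
  Finset.exists_erase_eq_of_card_add_one hS (by rw [card_board]; omega)

section Relabelling

variable {n x : ℕ}

def unstdElt (x t : ℕ) : ℕ := if t < x then t else t + 1

lemma stdElt_unstdElt (x t : ℕ) : stdElt x (unstdElt x t) = t := by
  unfold stdElt unstdElt; split_ifs <;> omega

lemma unstdElt_ne (x t : ℕ) : unstdElt x t ≠ x := by
  unfold unstdElt; split_ifs <;> omega

lemma unstdElt_mem_board {t : ℕ} (hx : x ∈ board n) (ht : t ∈ board (n - 1)) :
    unstdElt x t ∈ board n := by
  rw [mem_board] at *; unfold unstdElt; split_ifs <;> omega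

lemma stdElt_mem_board {r : ℕ} (hx : x ∈ board n) (hr : r ∈ board n) (hrx : r ≠ x) :
    stdElt x r ∈ board (n - 1) := by
  rw [mem_board] at *; unfold stdElt; split_ifs <;> omega

lemma stdElt_injOn (x : ℕ) : Set.InjOn (stdElt x) {x}ᶜ := by
  intro r hr r' hr' h
  simp only [Set.mem_compl_iff, Set.mem_singleton_iff] at hr hr'
  unfold stdElt at h; split_ifs at h <;> omega

lemma stdElt_injOn_of_notMem {S : Finset ℕ} (hxS : x ∉ S) : Set.InjOn (stdElt x) S :=
  (stdElt_injOn x).mono fun s hs => by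
    rintro rfl
    exact hxS hs

lemma card_stdSet {S : Finset ℕ} (hxS : x ∉ S) : (stdSet x S).card = S.card :=
  Finset.card_image_of_injOn (stdElt_injOn_of_notMem hxS)

lemma stdSet_subset_board {S : Finset ℕ} (hx : x ∈ board n) (hS : S ⊆ board n) (hxS : x ∉ S) :
    stdSet x S ⊆ board (n - 1) := by
  intro t ht
  obtain ⟨s, hs, rfl⟩ := Finset.mem_image.1 ht
  exact stdElt_mem_board hx (hS hs) (by rintro rfl; exact hxS hs)

lemma stdSet_erase {r : ℕ} {S : Finset ℕ} (hxS : x ∉ S) (hrx : r ≠ x) :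
    stdSet x (S.erase r) = (stdSet x S).erase (stdElt x r) := by
  have hinj : Set.InjOn (stdElt x) ↑(insert r S) :=
    stdElt_injOn_of_notMem (by simp [Ne.symm hrx, hxS])
  ext t
  simp only [stdSet, Finset.mem_image, Finset.mem_erase]
  constructor
  · rintro ⟨s, ⟨hsr, hs⟩, rfl⟩
    exact ⟨fun h => hsr (hinj (by simp [hs]) (by simp) h), s, hs, rfl⟩
  · rintro ⟨hne, s, hs, rfl⟩
    exact ⟨s, ⟨by rintro rfl; exact hne rfl, hs⟩, rfl⟩

lemma stdSet_erase_board (hx : x ∈ board n) :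
    stdSet x ((board n).erase x) = board (n - 1) := by
  ext t
  simp only [stdSet, Finset.mem_image, Finset.mem_erase]
  constructor
  · rintro ⟨s, ⟨hsx, hs⟩, rfl⟩
    exact stdElt_mem_board hx hs hsx
  · intro ht
    exact ⟨unstdElt x t, ⟨unstdElt_ne x t, unstdElt_mem_board hx ht⟩, stdElt_unstdElt x t⟩

lemma stdSet_erase_erase_board {r : ℕ} (hx : x ∈ board n) (hrx : r ≠ x) :
    stdSet x (((board n).erase r).erase x) = (board (n - 1)).erase (stdElt x r) := by
  rw [Finset.erase_right_comm, stdSet_erase (Finset.notMem_erase x _) hrx, stdSet_erase_board hx]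

end Relabelling

lemma aliceWins_iff_nonempty {n k : ℕ} (h : k = 0 ∨ n ≤ k) (F : Set (Finset ℕ)) :
    AliceWins n k F ↔ F.Nonempty := by
  rw [AliceWins, dif_pos h]

lemma bobWins_iff_nonempty {n k : ℕ} (h : k = 0 ∨ n ≤ k) (F : Set (Finset ℕ)) :
    BobWins n k F ↔ F.Nonempty := by
  rw [BobWins, dif_pos h]

lemma aliceWins_iff_exists {n k : ℕ} (h : ¬(k = 0 ∨ n ≤ k)) (F : Set (Finset ℕ)) :
    AliceWins n k F ↔ ∃ x ∈ board n,
      BobWins (n - 1) (k - 1) (secPlus F x) ∧ BobWins (n - 1) k (secMinus F x) := by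
  rw [AliceWins, dif_neg h]

lemma bobWins_iff_forall {n k : ℕ} (h : ¬(k = 0 ∨ n ≤ k)) (F : Set (Finset ℕ)) :
    BobWins n k F ↔ ∀ x ∈ board n,
      AliceWins (n - 1) (k - 1) (secPlus F x) ∨ AliceWins (n - 1) k (secMinus F x) := by
  rw [BobWins, dif_neg h]

/-- The family `F*` of the paper. -/
def complSingletons (n : ℕ) (F : Set (Finset ℕ)) : Set (Finset ℕ) :=
  {S | ∃ r ∈ board n, (board n).erase r ∉ F ∧ S = {r}}

section Sections

variable {n x : ℕ} {F : Set (Finset ℕ)}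

lemma nonempty_iff_exists_erase_board_mem (hn : 1 ≤ n) (hF : IsFamilyOn n (n - 1) F) :
    F.Nonempty ↔ ∃ r ∈ board n, (board n).erase r ∈ F := by
  constructor
  · rintro ⟨S, hS⟩
    obtain ⟨r, hr, rfl⟩ := exists_erase_board_eq hn (hF S hS).1 (hF S hS).2
    exact ⟨r, hr, hS⟩
  · rintro ⟨r, -, hr⟩
    exact ⟨_, hr⟩

lemma complSingletons_nonempty_iff :
    (complSingletons n F).Nonempty ↔ ∃ r ∈ board n, (board n).erase r ∉ F := by
  constructor
  · rintro ⟨_, r, hr, hrF, rfl⟩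
    exact ⟨r, hr, hrF⟩
  · rintro ⟨r, hr, hrF⟩
    exact ⟨_, r, hr, hrF, rfl⟩

lemma secMinus_nonempty_iff (hn : 1 ≤ n) (hF : IsFamilyOn n (n - 1) F) (hx : x ∈ board n) :
    (secMinus F x).Nonempty ↔ (board n).erase x ∈ F := by
  constructor
  · rintro ⟨_, S, hS, hxS, rfl⟩
    obtain ⟨r, -, rfl⟩ := exists_erase_board_eq hn (hF S hS).1 (hF S hS).2
    obtain rfl : r = x := by
      by_contra hrx
      exact hxS (Finset.mem_erase.2 ⟨Ne.symm hrx, hx⟩)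
    exact hS
  · intro h
    exact ⟨_, _, h, Finset.notMem_erase x _, rfl⟩

lemma secPlus_complSingletons_nonempty_iff (hx : x ∈ board n) :
    (secPlus (complSingletons n F) x).Nonempty ↔ (board n).erase x ∉ F := by
  constructor
  · rintro ⟨_, _, ⟨r, -, hrF, rfl⟩, hxr, rfl⟩
    rwa [Finset.mem_singleton.1 hxr]
  · intro h
    exact ⟨_, {x}, ⟨x, hx, h, rfl⟩, Finset.mem_singleton_self x, rfl⟩

lemma isFamilyOn_secPlus (hF : IsFamilyOn n (n - 1) F) (hx : x ∈ board n) :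
    IsFamilyOn (n - 1) (n - 1 - 1) (secPlus F x) := by
  rintro _ ⟨S, hS, hxS, rfl⟩
  obtain ⟨hSn, hcard⟩ := hF S hS
  have hxS' : x ∉ S.erase x := Finset.notMem_erase x S
  refine ⟨stdSet_subset_board hx ((S.erase_subset x).trans hSn) hxS', ?_⟩
  rw [card_stdSet hxS', Finset.card_erase_of_mem hxS, hcard]

lemma secMinus_complSingletons (hn : 1 ≤ n) (hF : IsFamilyOn n (n - 1) F) (hx : x ∈ board n) :
    secMinus (complSingletons n F) x = complSingletons (n - 1) (secPlus F x) := by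
  have erase_mem_secPlus_iff {r : ℕ} (hr : r ∈ board n) (hrx : r ≠ x) :
      (board (n - 1)).erase (stdElt x r) ∈ secPlus F x ↔ (board n).erase r ∈ F := by
    constructor
    · rintro ⟨S, hS, hxS, heq⟩
      obtain ⟨r', -, rfl⟩ := exists_erase_board_eq hn (hF S hS).1 (hF S hS).2
      have hr'x : r' ≠ x := by rintro rfl; exact Finset.notMem_erase _ _ hxS
      rw [stdSet_erase_erase_board hx hr'x,
        Finset.erase_inj _ (stdElt_mem_board hx hr hrx)] at heq
      rwa [stdElt_injOn x hrx hr'x heq]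
    · intro h
      exact ⟨_, h, Finset.mem_erase.2 ⟨Ne.symm hrx, hx⟩, (stdSet_erase_erase_board hx hrx).symm⟩
  ext T
  constructor
  · rintro ⟨_, ⟨r, hr, hrF, rfl⟩, hxr, rfl⟩
    have hrx : r ≠ x := by rintro rfl; exact hxr (Finset.mem_singleton_self r)
    exact ⟨stdElt x r, stdElt_mem_board hx hr hrx, (erase_mem_secPlus_iff hr hrx).not.2 hrF,
      Finset.image_singleton _ _⟩
  · rintro ⟨t, ht, htF, rfl⟩
    have hr := unstdElt_mem_board hx ht
    have hrx := unstdElt_ne x t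
    refine ⟨{unstdElt x t}, ⟨_, hr, fun h => htF ?_, rfl⟩, by simpa using Ne.symm hrx, ?_⟩
    · simpa [stdElt_unstdElt] using (erase_mem_secPlus_iff hr hrx).2 h
    · rw [stdSet, Finset.image_singleton, stdElt_unstdElt]

end Sections

section Step

variable {n : ℕ} {F : Set (Finset ℕ)}

lemma bobWins_pred_iff (hn : 2 ≤ n) (hF : IsFamilyOn n (n - 1) F) :
    BobWins n (n - 1) F ↔ ∀ x ∈ board n,
      AliceWins (n - 1) (n - 1 - 1) (secPlus F x) ∨ (board n).erase x ∈ F := by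
  rw [bobWins_iff_forall (by omega)]
  refine forall₂_congr fun x hx => ?_
  rw [aliceWins_iff_nonempty (Or.inr le_rfl), secMinus_nonempty_iff (by omega) hF hx]

lemma aliceWins_pred_iff (hn : 2 ≤ n) (hF : IsFamilyOn n (n - 1) F) :
    AliceWins n (n - 1) F ↔ ∃ x ∈ board n,
      BobWins (n - 1) (n - 1 - 1) (secPlus F x) ∧ (board n).erase x ∈ F := by
  rw [aliceWins_iff_exists (by omega)]
  refine exists_congr fun x => and_congr_right fun hx => ?_
  rw [bobWins_iff_nonempty (Or.inr le_rfl), secMinus_nonempty_iff (by omega) hF hx]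

lemma aliceWins_one_complSingletons_iff (hn : 2 ≤ n) (hF : IsFamilyOn n (n - 1) F) :
    AliceWins n 1 (complSingletons n F) ↔ ∃ x ∈ board n,
      (board n).erase x ∉ F ∧ BobWins (n - 1) 1 (complSingletons (n - 1) (secPlus F x)) := by
  rw [aliceWins_iff_exists (by omega)]
  refine exists_congr fun x => and_congr_right fun hx => ?_
  rw [bobWins_iff_nonempty (k := 1 - 1) (Or.inl rfl), secPlus_complSingletons_nonempty_iff hx,
    secMinus_complSingletons (by omega) hF hx]

lemma bobWins_one_complSingletons_iff (hn : 2 ≤ n) (hF : IsFamilyOn n (n - 1) F) :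
    BobWins n 1 (complSingletons n F) ↔ ∀ x ∈ board n,
      (board n).erase x ∉ F ∨ AliceWins (n - 1) 1 (complSingletons (n - 1) (secPlus F x)) := by
  rw [bobWins_iff_forall (by omega)]
  refine forall₂_congr fun x hx => ?_
  rw [aliceWins_iff_nonempty (k := 1 - 1) (Or.inl rfl), secPlus_complSingletons_nonempty_iff hx,
    secMinus_complSingletons (by omega) hF hx]

end Step

theorem wins_iff_not_wins_complSingletons (n : ℕ) (hn : 1 ≤ n) (F : Set (Finset ℕ))
    (hF : IsFamilyOn n (n - 1) F) :
    (BobWins n (n - 1) F ↔ ¬AliceWins n 1 (complSingletons n F)) ∧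
      (AliceWins n (n - 1) F ↔ ¬BobWins n 1 (complSingletons n F)) := by
  induction n using Nat.strong_induction_on generalizing F with
  | _ n ih =>
  obtain rfl | hn2 : n = 1 ∨ 2 ≤ n := by omega
  · have h0 : (1 - 1 : ℕ) = 0 ∨ 1 ≤ 1 - 1 := Or.inl rfl
    have h1 : (1 : ℕ) = 0 ∨ 1 ≤ 1 := Or.inr le_rfl
    rw [bobWins_iff_nonempty h0, aliceWins_iff_nonempty h0, aliceWins_iff_nonempty h1,
      bobWins_iff_nonempty h1, nonempty_iff_exists_erase_board_mem le_rfl hF,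
      complSingletons_nonempty_iff]
    simp [board]
  have ih_secPlus x (hx : x ∈ board n) :=
    ih (n - 1) (by omega) (by omega) _ (isFamilyOn_secPlus hF hx)
  rw [bobWins_pred_iff hn2 hF, aliceWins_one_complSingletons_iff hn2 hF,
    aliceWins_pred_iff hn2 hF, bobWins_one_complSingletons_iff hn2 hF]
  constructor
  · simp only [not_exists, not_and]
    refine forall₂_congr fun x hx => ?_
    rw [(ih_secPlus x hx).2]
    tauto
  · simp only [not_forall, not_or, not_not, exists_prop]
    refine exists_congr fun x => and_congr_right fun hx => ?_
    rw [(ih_secPlus x hx).1]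
    tauto

/-- for a family `F` of `(n-1)`-subsets of `[n]` and its
complementary singleton family `F* = { {r} : r ∈ [n], [n] \ {r} ∉ F }`,
Bob wins his `F`-game if and only if Alice does not win her `F*`-game. -/
theorem bob_iff_not_alice_complement (n : ℕ) (hn : 2 ≤ n) (F : Set (Finset ℕ))
    (hF : IsFamilyOn n (n - 1) F) :
    BobWins n (n - 1) F ↔
      ¬ AliceWins n 1
        {S : Finset ℕ | ∃ r ∈ board n, (board n).erase r ∉ F ∧ S = {r}} :=
  (wins_iff_not_wins_complSingletons n (by omega) F hF).1
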